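/- arXiv:1107.1679 — 2 statements merged into one kernel-verified Lean document; each statement's English description precedes it below -/
import Mathlib

section
/- Let p, q be real numbers with 0 ≤ q < p² and √q < p, let J_{p,q} := (−√(p−√q), √(p−√q)) and h_{p,q}(s) := √(p − s² + √((p − s²)² − q)). Let I be a nonempty open interval with I ⊆ J_{p,q} and 0 ∉ I, and let y : I → ℝ be a twice differentiable solution of s·((s²−p)²−q)·y''(s) + (s⁴−p²+q)·y'(s) − s³·y(s) = 0 on I. Then there exist real numbers a, b such that y(s) = a·h_{p,q}(s) + b/h_{p,q}(s) for all s ∈ I. That is, h_{p,q} and 1/h_{p,q} form a basis of the space of solutions of this ODE on I. -/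
/-!
With `R = √((p - s²)² - q)` one has `h' = -s h / R`, so `y = a h + b / h` has
`y' = -(s / R) (a h - b / h)`. Solving for `a` and `b` expresses them through `y` and `y'`;
for an arbitrary solution `y` these two expressions (`firstIntegralA`, `firstIntegralB`) have
zero derivative by the ODE, hence are constant on the interval `I`, and `y = a h + b / h`.
Conversely, if `a h + b / h` vanishes on `I` then so does `a h - b / h`, forcing `a = b = 0`.
-/

open Filter Topology Set

noncomputable def rootPQ (p q s : ℝ) : ℝ := √((p - s ^ 2) ^ 2 - q)

noncomputable def hPQ (p q s : ℝ) : ℝ := √(p - s ^ 2 + rootPQ p q s)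

section

variable {p q s : ℝ}

lemma sub_sq_pos_and_lt_sq_of_mem_Ioo (hs : s ∈ Ioo (-√(p - √q)) (√(p - √q))) :
    0 < p - s ^ 2 ∧ q < (p - s ^ 2) ^ 2 := by
  have hs2 : s ^ 2 < p - √q := by
    rw [← sq_abs]; exact (Real.lt_sqrt (abs_nonneg s)).1 (abs_lt.2 hs)
  have hpos : 0 < p - s ^ 2 := by linarith [Real.sqrt_nonneg q]
  exact ⟨hpos, (Real.sqrt_lt' hpos).1 (by linarith)⟩

lemma rootPQ_pos (hqs : q < (p - s ^ 2) ^ 2) : 0 < rootPQ p q s :=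
  Real.sqrt_pos.2 (sub_pos.2 hqs)

lemma rootPQ_sq (hqs : q < (p - s ^ 2) ^ 2) : rootPQ p q s ^ 2 = (p - s ^ 2) ^ 2 - q :=
  Real.sq_sqrt (sub_pos.2 hqs).le

lemma add_rootPQ_pos (hps : 0 < p - s ^ 2) : 0 < p - s ^ 2 + rootPQ p q s :=
  add_pos_of_pos_of_nonneg hps (Real.sqrt_nonneg _)

lemma hPQ_pos (hps : 0 < p - s ^ 2) : 0 < hPQ p q s :=
  Real.sqrt_pos.2 (add_rootPQ_pos hps)

lemma hPQ_sq (hps : 0 < p - s ^ 2) : hPQ p q s ^ 2 = p - s ^ 2 + rootPQ p q s :=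
  Real.sq_sqrt (add_rootPQ_pos hps).le

lemma hasDerivAt_const_sub_sq (p s : ℝ) : HasDerivAt (fun t : ℝ ↦ p - t ^ 2) (-(2 * s)) s := by
  simpa using (hasDerivAt_pow 2 s).const_sub p

lemma hasDerivAt_rootPQ (hqs : q < (p - s ^ 2) ^ 2) :
    HasDerivAt (rootPQ p q) (-(2 * s * (p - s ^ 2)) / rootPQ p q s) s := by
  refine ((((hasDerivAt_const_sub_sq p s).pow 2).sub_const q).sqrt
    (sub_pos.2 hqs).ne').congr_deriv ?_
  have := rootPQ_pos hqs
  simp only [Pi.pow_apply]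
  change _ / (2 * rootPQ p q s) = _
  field_simp
  ring

lemma hasDerivAt_hPQ (hps : 0 < p - s ^ 2) (hqs : q < (p - s ^ 2) ^ 2) :
    HasDerivAt (hPQ p q) (-(s * hPQ p q s) / rootPQ p q s) s := by
  refine (((hasDerivAt_const_sub_sq p s).add (hasDerivAt_rootPQ hqs)).sqrt
    (add_rootPQ_pos hps).ne').congr_deriv ?_
  have := rootPQ_pos hqs
  have := hPQ_pos (q := q) hps
  change _ / (2 * hPQ p q s) = _
  field_simp
  linear_combination s * hPQ_sq (q := q) hps

end

noncomputable def firstIntegralA (p q : ℝ) (y : ℝ → ℝ) (t : ℝ) : ℝ :=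
  (t * y t - rootPQ p q t * deriv y t) / (2 * t * hPQ p q t)

noncomputable def firstIntegralB (p q : ℝ) (y : ℝ → ℝ) (t : ℝ) : ℝ :=
  hPQ p q t * (t * y t + rootPQ p q t * deriv y t) / (2 * t)

section

variable {p q s : ℝ} {y : ℝ → ℝ}

lemma hasDerivAt_firstIntegralA (hs : s ≠ 0) (hps : 0 < p - s ^ 2) (hqs : q < (p - s ^ 2) ^ 2)
    (hy1 : DifferentiableAt ℝ y s) (hy2 : DifferentiableAt ℝ (deriv y) s)
    (hode : s * ((s ^ 2 - p) ^ 2 - q) * deriv (deriv y) s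
        + (s ^ 4 - p ^ 2 + q) * deriv y s - s ^ 3 * y s = 0) :
    HasDerivAt (firstIntegralA p q y) 0 s := by
  have hR := rootPQ_pos hqs
  have hH := hPQ_pos (q := q) hps
  have hnum : HasDerivAt (fun t ↦ t * y t - rootPQ p q t * deriv y t)
      (1 * y s + s * deriv y s - (-(2 * s * (p - s ^ 2)) / rootPQ p q s * deriv y s
        + rootPQ p q s * deriv (deriv y) s)) s :=
    ((hasDerivAt_id s).mul hy1.hasDerivAt).sub ((hasDerivAt_rootPQ hqs).mul hy2.hasDerivAt)
  have hden : HasDerivAt (fun t ↦ 2 * t * hPQ p q t)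
      (2 * 1 * hPQ p q s + 2 * s * (-(s * hPQ p q s) / rootPQ p q s)) s :=
    ((hasDerivAt_id s).const_mul 2).mul (hasDerivAt_hPQ hps hqs)
  refine (hnum.fun_div hden (by positivity)).congr_deriv ?_
  field_simp
  linear_combination -hode + (deriv y s - s * deriv (deriv y) s) * rootPQ_sq hqs

lemma hasDerivAt_firstIntegralB (hs : s ≠ 0) (hps : 0 < p - s ^ 2) (hqs : q < (p - s ^ 2) ^ 2)
    (hy1 : DifferentiableAt ℝ y s) (hy2 : DifferentiableAt ℝ (deriv y) s)
    (hode : s * ((s ^ 2 - p) ^ 2 - q) * deriv (deriv y) s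
        + (s ^ 4 - p ^ 2 + q) * deriv y s - s ^ 3 * y s = 0) :
    HasDerivAt (firstIntegralB p q y) 0 s := by
  have hR := rootPQ_pos hqs
  have hnum : HasDerivAt (fun t ↦ hPQ p q t * (t * y t + rootPQ p q t * deriv y t))
      (-(s * hPQ p q s) / rootPQ p q s * (s * y s + rootPQ p q s * deriv y s)
        + hPQ p q s * (1 * y s + s * deriv y s + (-(2 * s * (p - s ^ 2)) / rootPQ p q s * deriv y s
          + rootPQ p q s * deriv (deriv y) s))) s :=
    (hasDerivAt_hPQ hps hqs).mul
      (((hasDerivAt_id s).mul hy1.hasDerivAt).add ((hasDerivAt_rootPQ hqs).mul hy2.hasDerivAt))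
  have hden : HasDerivAt (fun t : ℝ ↦ 2 * t) (2 * 1) s := (hasDerivAt_id s).const_mul 2
  refine (hnum.fun_div hden (by positivity)).congr_deriv ?_
  field_simp
  linear_combination
    hPQ p q s * hode + hPQ p q s * (s * deriv (deriv y) s - deriv y s) * rootPQ_sq hqs

lemma firstIntegralA_mul_add_firstIntegralB_div (hs : s ≠ 0) (hps : 0 < p - s ^ 2) :
    firstIntegralA p q y s * hPQ p q s + firstIntegralB p q y s / hPQ p q s = y s := by
  have := hPQ_pos (q := q) hps
  unfold firstIntegralA firstIntegralB
  field_simp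
  ring

end

lemma eq_zero_of_eventually_mul_hPQ_add_div_hPQ_eq_zero {p q s a b : ℝ} (hs : s ≠ 0)
    (hps : 0 < p - s ^ 2) (hqs : q < (p - s ^ 2) ^ 2)
    (hab : ∀ᶠ t in 𝓝 s, a * hPQ p q t + b / hPQ p q t = 0) : a = 0 ∧ b = 0 := by
  have hR := rootPQ_pos hqs
  have hH := hPQ_pos (q := q) hps
  have hderiv := (((hasDerivAt_hPQ hps hqs).const_mul a).add
    ((hasDerivAt_const s b).div (hasDerivAt_hPQ hps hqs) hH.ne')).unique
    ((hasDerivAt_const s 0).congr_of_eventuallyEq hab)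
  have hb : b = a * hPQ p q s ^ 2 := by
    field_simp at hderiv
    have : s * (b - a * hPQ p q s ^ 2) = 0 := by linear_combination hderiv
    linear_combination (mul_eq_zero.1 this).resolve_left hs
  have hsum : a * hPQ p q s ^ 2 + b = 0 := by
    have := hab.self_of_nhds
    field_simp at this
    linear_combination this
  have ha : a = 0 := by
    have : a * (2 * hPQ p q s ^ 2) = 0 := by linear_combination hsum - hb
    exact (mul_eq_zero.1 this).resolve_right (by positivity)
  exact ⟨ha, by rw [hb, ha, zero_mul]⟩

theorem stmt_6_general (p q : ℝ)
    (h : ℝ → ℝ)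
    (hdef : ∀ s, h s = Real.sqrt (p - s ^ 2 + Real.sqrt ((p - s ^ 2) ^ 2 - q)))
    (I : Set ℝ) (hIo : IsOpen I) (hIc : I.OrdConnected) (hIne : I.Nonempty)
    (hIJ : I ⊆ Set.Ioo (-Real.sqrt (p - Real.sqrt q)) (Real.sqrt (p - Real.sqrt q)))
    (h0I : (0 : ℝ) ∉ I) (y : ℝ → ℝ)
    (hy1 : ∀ s ∈ I, DifferentiableAt ℝ y s)
    (hy2 : ∀ s ∈ I, DifferentiableAt ℝ (deriv y) s)
    (hode : ∀ s ∈ I, s * ((s ^ 2 - p) ^ 2 - q) * deriv (deriv y) s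
        + (s ^ 4 - p ^ 2 + q) * deriv y s - s ^ 3 * y s = 0) :
    (∃ a b : ℝ, ∀ s ∈ I, y s = a * h s + b / h s) ∧
    (∀ a b : ℝ, (∀ s ∈ I, a * h s + b / h s = 0) → a = 0 ∧ b = 0) := by
  obtain rfl : h = hPQ p q := funext hdef
  have hI : ∀ s ∈ I, s ≠ 0 ∧ 0 < p - s ^ 2 ∧ q < (p - s ^ 2) ^ 2 := fun s hs ↦
    ⟨ne_of_mem_of_not_mem hs h0I, sub_sq_pos_and_lt_sq_of_mem_Ioo (hIJ hs)⟩
  have hconst : ∀ f : ℝ → ℝ, (∀ s ∈ I, HasDerivAt f 0 s) → ∃ c, ∀ s ∈ I, f s = c :=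
    fun f hf ↦ hIo.exists_is_const_of_deriv_eq_zero hIc.isPreconnected
      (fun s hs ↦ (hf s hs).differentiableAt.differentiableWithinAt) (fun s hs ↦ (hf s hs).deriv)
  obtain ⟨a, ha⟩ := hconst (firstIntegralA p q y) fun s hs ↦ by
    obtain ⟨hs0, hps, hqs⟩ := hI s hs
    exact hasDerivAt_firstIntegralA hs0 hps hqs (hy1 s hs) (hy2 s hs) (hode s hs)
  obtain ⟨b, hb⟩ := hconst (firstIntegralB p q y) fun s hs ↦ by
    obtain ⟨hs0, hps, hqs⟩ := hI s hs
    exact hasDerivAt_firstIntegralB hs0 hps hqs (hy1 s hs) (hy2 s hs) (hode s hs)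
  refine ⟨⟨a, b, fun s hs ↦ ?_⟩, fun a b hab ↦ ?_⟩
  · rw [← ha s hs, ← hb s hs, firstIntegralA_mul_add_firstIntegralB_div (hI s hs).1 (hI s hs).2.1]
  · obtain ⟨s, hs⟩ := hIne
    obtain ⟨hs0, hps, hqs⟩ := hI s hs
    exact eq_zero_of_eventually_mul_hPQ_add_div_hPQ_eq_zero hs0 hps hqs
      (eventually_of_mem (hIo.mem_nhds hs) hab)

/-- For `0 ≤ q < p²`, `√q < p`, any twice differentiable solution of
`s((s²−p)²−q) y'' + (s⁴−p²+q) y' − s³ y = 0` on a nonempty open interval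
`I ⊆ J_{p,q}` with `0 ∉ I` is of the form `a·h_{p,q} + b/h_{p,q}`; moreover `h_{p,q}`
and `1/h_{p,q}` are linearly independent on `I`, i.e. they form a basis of the solution
space. -/
theorem stmt_6 (p q : ℝ) (hq0 : 0 ≤ q) (hq : q < p ^ 2) (hp : Real.sqrt q < p)
    (h : ℝ → ℝ)
    (hdef : ∀ s, h s = Real.sqrt (p - s ^ 2 + Real.sqrt ((p - s ^ 2) ^ 2 - q)))
    (I : Set ℝ) (hIo : IsOpen I) (hIc : I.OrdConnected) (hIne : I.Nonempty)
    (hIJ : I ⊆ Set.Ioo (-Real.sqrt (p - Real.sqrt q)) (Real.sqrt (p - Real.sqrt q)))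
    (h0I : (0 : ℝ) ∉ I) (y : ℝ → ℝ)
    (hy1 : ∀ s ∈ I, DifferentiableAt ℝ y s)
    (hy2 : ∀ s ∈ I, DifferentiableAt ℝ (deriv y) s)
    (hode : ∀ s ∈ I, s * ((s ^ 2 - p) ^ 2 - q) * deriv (deriv y) s
        + (s ^ 4 - p ^ 2 + q) * deriv y s - s ^ 3 * y s = 0) :
    (∃ a b : ℝ, ∀ s ∈ I, y s = a * h s + b / h s) ∧
    (∀ a b : ℝ, (∀ s ∈ I, a * h s + b / h s = 0) → a = 0 ∧ b = 0) :=
  stmt_6_general p q h hdef I hIo hIc hIne hIJ h0I y hy1 hy2 hode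
end

section
/- Let p, q ∈ ℝ with 0 ≤ q < p² and √q < p, let J_{p,q} := (−√(p−√q), √(p−√q)) and h_{p,q}(s) := √(p − s² + √((p − s²)² − q)). Then the function s ↦ log h_{p,q}(s) is differentiable on J_{p,q} with derivative (log h_{p,q})'(s) = −s / √((s²−p)² − q) for all s ∈ J_{p,q}; equivalently, h_{p,q}'(s) = −s·h_{p,q}(s)/√((s²−p)² − q). -/
/-!
With `x = p - s²` and `r = √(x² - q)`, the function `F x = x + r` satisfies `F' = F / r`, since
`1 + x / r = (r + x) / r`. Hence `(√F)' = √F / (2r)`, and the chain rule through `x' = -2s`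
gives `h' = -s h / r` and `(log h)' = h' / h = -s / r`. On `J_{p,q}` one has `√q < p - s²`,
which makes `r > 0` and `F > 0`.
-/

open Real

lemma sqrt_lt_sub_sq_of_mem_Ioo {p q s : ℝ}
    (hs : s ∈ Set.Ioo (-√(p - √q)) (√(p - √q))) : √q < p - s ^ 2 := by
  have := Real.sq_lt.mpr hs
  linarith

lemma hasDerivAt_add_sqrt_sq_sub {q x : ℝ} (hx : q < x ^ 2) :
    HasDerivAt (fun y => y + √(y ^ 2 - q)) ((x + √(x ^ 2 - q)) / √(x ^ 2 - q)) x := by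
  have hr : 0 < √(x ^ 2 - q) := Real.sqrt_pos.mpr (sub_pos.mpr hx)
  have hsq : HasDerivAt (fun y => y ^ 2 - q) (2 * x) x := by
    simpa using (hasDerivAt_pow 2 x).sub_const q
  refine ((hasDerivAt_id' x).add (hsq.sqrt (sub_pos.mpr hx).ne')).congr_deriv ?_
  field_simp
  ring

lemma add_sqrt_sq_sub_pos {q x : ℝ} (hx : √q < x) : 0 < x + √(x ^ 2 - q) := by
  have hx0 : 0 < x := (Real.sqrt_nonneg q).trans_lt hx
  positivity

lemma hasDerivAt_sqrt_add_sqrt_sq_sub {q x : ℝ} (hx : √q < x) :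
    HasDerivAt (fun y => √(y + √(y ^ 2 - q)))
      (√(x + √(x ^ 2 - q)) / (2 * √(x ^ 2 - q))) x := by
  have hqx := Real.lt_sq_of_sqrt_lt hx
  have hF := add_sqrt_sq_sub_pos hx
  have hF2 : √(x + √(x ^ 2 - q)) ^ 2 = x + √(x ^ 2 - q) := Real.sq_sqrt hF.le
  have hr : 0 < √(x ^ 2 - q) := Real.sqrt_pos.mpr (sub_pos.mpr hqx)
  refine ((hasDerivAt_add_sqrt_sq_sub hqx).sqrt hF.ne').congr_deriv ?_
  field_simp
  linear_combination -hF2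

theorem stmt_16_general (p q : ℝ)
    (h : ℝ → ℝ)
    (hdef : ∀ s, h s = Real.sqrt (p - s ^ 2 + Real.sqrt ((p - s ^ 2) ^ 2 - q))) :
    ∀ s ∈ Set.Ioo (-Real.sqrt (p - Real.sqrt q)) (Real.sqrt (p - Real.sqrt q)),
      HasDerivAt (fun t => Real.log (h t))
        (-s / Real.sqrt ((s ^ 2 - p) ^ 2 - q)) s ∧
      HasDerivAt h (-s * h s / Real.sqrt ((s ^ 2 - p) ^ 2 - q)) s := by
  intro s hs
  have hx := sqrt_lt_sub_sq_of_mem_Ioo hs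
  have hr : 0 < √((p - s ^ 2) ^ 2 - q) :=
    Real.sqrt_pos.mpr (sub_pos.mpr (Real.lt_sq_of_sqrt_lt hx))
  have hh : 0 < h s := by
    rw [hdef]
    exact Real.sqrt_pos.mpr (add_sqrt_sq_sub_pos hx)
  have hsym : (s ^ 2 - p) ^ 2 = (p - s ^ 2) ^ 2 := by ring
  have hx' : HasDerivAt (fun t => p - t ^ 2) (-(2 * s)) s := by
    simpa using (hasDerivAt_pow 2 s).const_sub p
  have hderiv : HasDerivAt h (-s * h s / √((s ^ 2 - p) ^ 2 - q)) s := by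
    rw [hdef s, funext hdef, hsym]
    refine ((hasDerivAt_sqrt_add_sqrt_sq_sub hx).comp s hx').congr_deriv ?_
    field_simp
  refine ⟨(hderiv.log hh.ne').congr_deriv ?_, hderiv⟩
  field_simp

/-- For `0 ≤ q < p²`, `√q < p`, the function `log h_{p,q}` is
differentiable on `J_{p,q}` with derivative `−s/√((s²−p)²−q)`; equivalently
`h_{p,q}'(s) = −s h_{p,q}(s)/√((s²−p)²−q)`. -/
theorem stmt_16 (p q : ℝ) (hq0 : 0 ≤ q) (hq : q < p ^ 2) (hp : Real.sqrt q < p)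
    (h : ℝ → ℝ)
    (hdef : ∀ s, h s = Real.sqrt (p - s ^ 2 + Real.sqrt ((p - s ^ 2) ^ 2 - q))) :
    ∀ s ∈ Set.Ioo (-Real.sqrt (p - Real.sqrt q)) (Real.sqrt (p - Real.sqrt q)),
      HasDerivAt (fun t => Real.log (h t))
        (-s / Real.sqrt ((s ^ 2 - p) ^ 2 - q)) s ∧
      HasDerivAt h (-s * h s / Real.sqrt ((s ^ 2 - p) ^ 2 - q)) s :=
  stmt_16_general p q h hdef
end
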